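/- arXiv:1601.08111 — 4 statements merged into one kernel-verified Lean document; each statement's English description precedes it below -/
import Mathlib

section
/- Define the weight of a bin (a finite multiset A of item sizes) as w(A) = s(A) + k(A) - 13, where s(A) is the total size and k(A) is the number of items in A with size greater than 6. If a valid input instance (items of size in [0,12]) is packed into m bins in any way, and the instance admits some packing into m bins each of size at most 12, then the sum of w over the m bins of the arbitrary packing is at most 0. -/
/-- Weight of a bin `A`: `w(A) = s(A) + k(A) - 13` where `k(A)` counts items of size > 6.
If a valid instance (admitting a packing into `m` bins of size at most 12) is packed
into `m` bins in any way, the total weight is at most 0. -/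
theorem stmt_1 {ι : Type*} [Fintype ι] (m : ℕ) (size : ι → ℝ)
    (hsize : ∀ i, size i ∈ Set.Icc (0 : ℝ) 12)
    (Q : ι → Fin m)
    (hQ : ∀ b : Fin m, ∑ i ∈ Finset.univ.filter (fun i => Q i = b), size i ≤ 12)
    (P : ι → Fin m) :
    ∑ b : Fin m,
      ((∑ i ∈ Finset.univ.filter (fun i => P i = b), size i) +
        ((Finset.univ.filter (fun i => P i = b ∧ 6 < size i)).card : ℝ) - 13) ≤ 0 := by
  classical
  -- fiberwise sums
  have hfibS : ∀ (R : ι → Fin m),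
      ∑ b : Fin m, ∑ i ∈ Finset.univ.filter (fun i => R i = b), size i = ∑ i, size i := by
    intro R
    exact Finset.sum_fiberwise _ _ _
  have hfilter : ∀ (R : ι → Fin m) (b : Fin m),
      Finset.univ.filter (fun i => R i = b ∧ 6 < size i)
        = (Finset.univ.filter (fun i => 6 < size i)).filter (fun i => R i = b) := by
    intro R b
    rw [Finset.filter_filter]
    exact Finset.filter_congr (by tauto)
  have hfibK : ∀ (R : ι → Fin m),
      ∑ b : Fin m, ((Finset.univ.filter (fun i => R i = b ∧ 6 < size i)).card : ℝ)
        = ((Finset.univ.filter (fun i => 6 < size i)).card : ℝ) := by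
    intro R
    simp_rw [hfilter R, Finset.card_eq_sum_ones]
    push_cast
    exact Finset.sum_fiberwise _ _ _
  -- per-bin bound for Q
  have key : ∀ b : Fin m,
      (∑ i ∈ Finset.univ.filter (fun i => Q i = b), size i)
        + ((Finset.univ.filter (fun i => Q i = b ∧ 6 < size i)).card : ℝ) ≤ 13 := by
    intro b
    set B := Finset.univ.filter (fun i => Q i = b ∧ 6 < size i) with hB
    have hsub : B ⊆ Finset.univ.filter (fun i => Q i = b) := by
      intro i hi
      simp only [hB, Finset.mem_filter] at hi ⊢
      exact ⟨hi.1, hi.2.1⟩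
    have hle : B.card ≤ 1 := by
      by_contra h
      push_neg at h
      have hne : B.Nonempty := Finset.card_pos.mp (by omega)
      have h1 : (6 : ℝ) * B.card < ∑ i ∈ B, size i := by
        calc (6 : ℝ) * B.card = ∑ i ∈ B, (6 : ℝ) := by
              rw [Finset.sum_const, nsmul_eq_mul]; ring
          _ < ∑ i ∈ B, size i := by
              apply Finset.sum_lt_sum_of_nonempty hne
              intro i hi
              simp only [hB, Finset.mem_filter] at hi
              exact hi.2.2
      have h2 : ∑ i ∈ B, size i ≤ ∑ i ∈ Finset.univ.filter (fun i => Q i = b), size i :=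
        Finset.sum_le_sum_of_subset_of_nonneg hsub (fun i _ _ => (hsize i).1)
      have h3 : (12 : ℝ) ≤ 6 * B.card := by
        have : (2 : ℝ) ≤ B.card := by exact_mod_cast h
        linarith
      linarith [hQ b]
    rcases Nat.le_one_iff_eq_zero_or_eq_one.mp hle with h0 | h1
    · rw [h0]; simpa using le_trans (hQ b) (by norm_num)
    · rw [h1]; push_cast; linarith [hQ b]
  -- combine
  have hsum : ∑ i, size i + ((Finset.univ.filter (fun i => 6 < size i)).card : ℝ)
      ≤ 13 * m := by
    calc ∑ i, size i + ((Finset.univ.filter (fun i => 6 < size i)).card : ℝ)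
        = ∑ b : Fin m, ((∑ i ∈ Finset.univ.filter (fun i => Q i = b), size i)
            + ((Finset.univ.filter (fun i => Q i = b ∧ 6 < size i)).card : ℝ)) := by
          rw [Finset.sum_add_distrib, hfibS Q, hfibK Q]
      _ ≤ ∑ _b : Fin m, (13 : ℝ) := Finset.sum_le_sum (fun b _ => key b)
      _ = 13 * m := by simp [mul_comm]
  have : ∑ b : Fin m,
      ((∑ i ∈ Finset.univ.filter (fun i => P i = b), size i) +
        ((Finset.univ.filter (fun i => P i = b ∧ 6 < size i)).card : ℝ) - 13)
      = ∑ i, size i + ((Finset.univ.filter (fun i => 6 < size i)).card : ℝ) - 13 * m := by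
    simp_rw [sub_eq_add_neg, Finset.sum_add_distrib]
    rw [hfibS P, hfibK P]
    simp [mul_comm]
  rw [this]
  linarith
end

section
/- Assign to each item a value: 3 if its size is in (9,12], 2 if in (6,9], 1 if in (3,4], and 0 otherwise; define the value of a bin A as v(A) = (sum of item values in A) - 3. If a set of items admits a packing into m bins each of total size at most 12, then for any partition of the items into m bins, the total value sum over bins is at most 0. -/
/-- Value of an item by size: 3 on (9,12], 2 on (6,9], 1 on (3,4], 0 otherwise. -/
noncomputable def itemValue (x : ℝ) : ℤ :=
  if 9 < x ∧ x ≤ 12 then 3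
  else if 6 < x ∧ x ≤ 9 then 2
  else if 3 < x ∧ x ≤ 4 then 1
  else 0

lemma itemValue_le_third {x : ℝ} (hx : 0 ≤ x) : (itemValue x : ℝ) ≤ x / 3 := by
  unfold itemValue
  split_ifs with h1 h2 h3 <;> push_cast <;>
    first | linarith [h1.1] | linarith [h2.1] | linarith [h3.1] | linarith

lemma itemValue_lt_third {x : ℝ} (hx : itemValue x ≠ 0) : (itemValue x : ℝ) < x / 3 := by
  unfold itemValue at *
  split_ifs at hx ⊢ with h1 h2 h3 <;> push_cast <;>
    first | linarith [h1.1] | linarith [h2.1] | linarith [h3.1] | simp at hx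

lemma bin_bound {ι : Type*} (s : Finset ι) (size : ι → ℝ)
    (h0 : ∀ i ∈ s, 0 ≤ size i) (h : ∑ i ∈ s, size i ≤ 12) :
    ∑ i ∈ s, itemValue (size i) ≤ 3 := by
  by_cases hT : ∀ i ∈ s, itemValue (size i) = 0
  · rw [Finset.sum_eq_zero hT]; norm_num
  · push_neg at hT
    obtain ⟨i₀, hi₀s, hi₀⟩ := hT
    have hlt : ((∑ i ∈ s, itemValue (size i) : ℤ) : ℝ) < 4 := by
      push_cast
      calc ∑ i ∈ s, (itemValue (size i) : ℝ) < ∑ i ∈ s, size i / 3 := by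
            apply Finset.sum_lt_sum
            · exact fun i hi => itemValue_le_third (h0 i hi)
            · exact ⟨i₀, hi₀s, itemValue_lt_third hi₀⟩
        _ = (∑ i ∈ s, size i) / 3 := by rw [Finset.sum_div]
        _ ≤ 4 := by linarith
    have : (∑ i ∈ s, itemValue (size i)) < 4 := by exact_mod_cast hlt
    omega

/-- If the items admit a packing into `m` bins each of total size at most 12, then for
any partition of the items into `m` bins, the total value `∑_b (value-sum of bin b) - 3`
is at most 0. -/
theorem stmt_2 {ι : Type*} [Fintype ι] (m : ℕ) (size : ι → ℝ)
    (hsize : ∀ i, size i ∈ Set.Icc (0 : ℝ) 12)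
    (Q : ι → Fin m)
    (hQ : ∀ b : Fin m, ∑ i ∈ Finset.univ.filter (fun i => Q i = b), size i ≤ 12)
    (P : ι → Fin m) :
    ∑ b : Fin m,
      ((∑ i ∈ Finset.univ.filter (fun i => P i = b), itemValue (size i)) - 3) ≤ 0 := by
  have hP : ∑ b : Fin m, ∑ i ∈ Finset.univ.filter (fun i => P i = b), itemValue (size i)
      = ∑ i : ι, itemValue (size i) := Finset.sum_fiberwise _ _ _
  have hQ' : ∑ b : Fin m, ∑ i ∈ Finset.univ.filter (fun i => Q i = b), itemValue (size i)
      = ∑ i : ι, itemValue (size i) := Finset.sum_fiberwise _ _ _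
  have hbound : ∑ i : ι, itemValue (size i) ≤ 3 * m := by
    rw [← hQ']
    calc ∑ b : Fin m, ∑ i ∈ Finset.univ.filter (fun i => Q i = b), itemValue (size i)
        ≤ ∑ _b : Fin m, (3 : ℤ) :=
          Finset.sum_le_sum fun b _ =>
            bin_bound _ size (fun i _ => (hsize i).1) (hQ b)
      _ = 3 * m := by simp [mul_comm]
  rw [Finset.sum_sub_distrib, hP]
  simp only [Finset.sum_const, Finset.card_univ, Fintype.card_fin, nsmul_eq_mul, mul_comm]
  omega
end

section
/- No multiset of real numbers from [0,12] with total sum at most 12 can have value-sum greater than 3, where the value of a number x is 3 if x ∈ (9,12], 2 if x ∈ (6,9], 1 if x ∈ (3,4], and 0 otherwise. -/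
lemma itemValue_le (x : ℝ) (hx : 0 ≤ x) : 3 * ((itemValue x : ℤ) : ℝ) ≤ x := by
  unfold itemValue
  split_ifs with h1 h2 h3 <;> push_cast <;> try linarith [h1.1]
  · linarith [h2.1]
  · linarith [h3.1]
  · linarith

lemma itemValue_lt (x : ℝ) (hx : 0 < itemValue x) : 3 * ((itemValue x : ℤ) : ℝ) < x := by
  unfold itemValue at *
  split_ifs at hx ⊢ with h1 h2 h3 <;> push_cast <;> try linarith [h1.1]
  · linarith [h2.1]
  · linarith [h3.1]
  · simp at hx

lemma sum_val_le (A : Multiset ℝ) (h : ∀ x ∈ A, 0 ≤ x) :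
    3 * (((A.map itemValue).sum : ℤ) : ℝ) ≤ A.sum := by
  induction A using Multiset.induction with
  | empty => simp
  | cons a s ih =>
      simp only [Multiset.map_cons, Multiset.sum_cons]
      rw [Int.cast_add]
      have h1 := itemValue_le a (h a (Multiset.mem_cons_self a s))
      have h2 := ih (fun x hx => h x (Multiset.mem_cons_of_mem hx))
      linarith

lemma sum_val_lt (A : Multiset ℝ) (h : ∀ x ∈ A, 0 ≤ x)
    (hpos : 0 < (A.map itemValue).sum) :
    3 * (((A.map itemValue).sum : ℤ) : ℝ) < A.sum := by
  induction A using Multiset.induction with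
  | empty => simp at hpos
  | cons a s ih =>
      simp only [Multiset.map_cons, Multiset.sum_cons] at hpos ⊢
      rw [Int.cast_add]
      have h2 := sum_val_le s (fun x hx => h x (Multiset.mem_cons_of_mem hx))
      rcases lt_or_ge 0 (itemValue a) with hva | hva
      · have := itemValue_lt a hva
        linarith
      · have h1 := itemValue_le a (h a (Multiset.mem_cons_self a s))
        have hpos' : 0 < (s.map itemValue).sum := by omega
        have := ih (fun x hx => h x (Multiset.mem_cons_of_mem hx)) hpos'
        linarith

/-- No multiset of reals from [0,12] with total sum at most 12 has value-sum
greater than 3. -/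
theorem stmt_3 (A : Multiset ℝ) (hA : ∀ x ∈ A, x ∈ Set.Icc (0 : ℝ) 12)
    (hsum : A.sum ≤ 12) :
    (A.map itemValue).sum ≤ 3 := by
  by_contra h
  push_neg at h
  have hpos : 0 < (A.map itemValue).sum := by omega
  have h4 : (4 : ℤ) ≤ (A.map itemValue).sum := by omega
  have := sum_val_lt A (fun x hx => (hA x hx).1) hpos
  have : (12 : ℝ) ≤ 3 * (((A.map itemValue).sum : ℤ) : ℝ) := by
    have : (4 : ℝ) ≤ (((A.map itemValue).sum : ℤ) : ℝ) := by exact_mod_cast h4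
    linarith
  linarith
end

section
/- The 1.5-stretching analysis is tight: there is an instance packable into m bins of capacity 12 (two items of size 6 and m-1 items of size 12, for m ≥ 2) on which any algorithm that first packs the two size-6 items into distinct bins must subsequently place some size-12 item into a bin already containing a size-6 item, producing a bin of size 18. -/
/-- Tightness of the 1.5 analysis: with `m ≥ 2` bins, if two items of size 6 are packed
into distinct bins `b1 ≠ b2`, then however the `m - 1` items of size 12 are assigned to
the `m` bins, some bin receives total size at least 18. -/
theorem stmt_16 (m : ℕ) (hm : 2 ≤ m) (b1 b2 : Fin m) (hb : b1 ≠ b2)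
    (P : Fin (m - 1) → Fin m) :
    ∃ j : Fin m,
      (if j = b1 then (6 : ℝ) else 0) + (if j = b2 then (6 : ℝ) else 0) +
        12 * ((Finset.univ.filter (fun i => P i = j)).card : ℝ) ≥ 18 := by
  by_cases hbig : ∃ j : Fin m, 2 ≤ (Finset.univ.filter (fun i => P i = j)).card
  · obtain ⟨j, hj⟩ := hbig
    refine ⟨j, ?_⟩
    have h2 : (2 : ℝ) ≤ ((Finset.univ.filter (fun i => P i = j)).card : ℝ) := by
      exact_mod_cast hj
    have h1 : (0:ℝ) ≤ (if j = b1 then (6 : ℝ) else 0) := by positivity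
    have h2' : (0:ℝ) ≤ (if j = b2 then (6 : ℝ) else 0) := by positivity
    nlinarith
  · push_neg at hbig
    -- P is injective
    have hinj : Function.Injective P := by
      intro i1 i2 h
      by_contra hne
      have : 2 ≤ (Finset.univ.filter (fun i => P i = P i1)).card := by
        apply Finset.one_lt_card.mpr
        exact ⟨i1, by simp, i2, by simp [h], hne⟩
      exact absurd this (not_le.mpr (hbig _))
    -- some item lands on b1 or b2
    have hexists : ∃ i, P i = b1 ∨ P i = b2 := by
      by_contra hno
      push_neg at hno
      have hsub : Finset.univ.image P ⊆ Finset.univ \ {b1, b2} := by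
        intro x hx
        simp only [Finset.mem_image] at hx
        obtain ⟨i, _, rfl⟩ := hx
        simp [Finset.mem_sdiff, (hno i).1, (hno i).2]
      have h1 : (Finset.univ.image P).card = m - 1 := by
        rw [Finset.card_image_of_injective _ hinj]
        simp
      have h2 : (Finset.univ \ ({b1, b2} : Finset (Fin m))).card = m - 2 := by
        rw [Finset.card_sdiff_of_subset (by simp)]
        simp [Finset.card_pair hb]
      have := Finset.card_le_card hsub
      omega
    obtain ⟨i, hi⟩ := hexists
    rcases hi with hi | hi
    · refine ⟨b1, ?_⟩
      have hc : 1 ≤ (Finset.univ.filter (fun i' => P i' = b1)).card :=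
        Finset.card_pos.mpr ⟨i, by simp [hi]⟩
      have hc' : (1 : ℝ) ≤ ((Finset.univ.filter (fun i' => P i' = b1)).card : ℝ) := by
        exact_mod_cast hc
      have h2' : (0:ℝ) ≤ (if b1 = b2 then (6 : ℝ) else 0) := by positivity
      simp only [if_pos rfl, if_true]
      nlinarith
    · refine ⟨b2, ?_⟩
      have hc : 1 ≤ (Finset.univ.filter (fun i' => P i' = b2)).card :=
        Finset.card_pos.mpr ⟨i, by simp [hi]⟩
      have hc' : (1 : ℝ) ≤ ((Finset.univ.filter (fun i' => P i' = b2)).card : ℝ) := by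
        exact_mod_cast hc
      have h1' : (0:ℝ) ≤ (if b2 = b1 then (6 : ℝ) else 0) := by positivity
      simp only [if_pos rfl, if_true]
      nlinarith
end
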